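/- The negative log-likelihood is bounded by the surrogate loss: for any policy $\pi$ and any family of goal-conditioned policies $(\pi^{\tilde x})_{\tilde x \in \mathcal{D}}$, $L(\pi) := \frac{1}{N} \sum_{\tilde x \in \mathcal{D}} -\log p_{H+1}^\pi(\tilde x) \le \frac{1}{N}\sum_{\tilde x \in \mathcal{D}} \left( \mathbb{E}_{\pi^{\tilde x}}\left[-\log p_H(\tilde x \mid x_H, y_H)\right] + \KL(p^{\pi^{\tilde x}}, p^\pi) \right)$. -/

import Mathlib

/-!
For each goal `x̃`, the bound is the Gibbs (evidence lower bound) inequality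
`-log ∑ w ≤ ∑ q log (q / w)` for the unnormalised weights `w ω = pπ ω * pH(x̃ | x_H, y_H)` and
the probability vector `q = q x̃`, which follows by summing `q - w / S ≤ q log (q S / w)`
(an instance of `log x ≤ x - 1`) with `S = ∑ w`. Splitting `log (q / (pπ pH))` then yields the
expected negative log-likelihood plus the KL divergence.
-/

open Finset Real

lemma sub_le_mul_log_div {q w : ℝ} (hq : 0 ≤ q) (hw : 0 ≤ w) (hac : w = 0 → q = 0) :
    q - w ≤ q * log (q / w) := by
  rcases hq.eq_or_lt with rfl | hq
  · simpa using hw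
  have hw : 0 < w := hw.lt_of_ne fun h => hq.ne' (hac h.symm)
  have h := one_sub_inv_le_log_of_pos (div_pos hq hw)
  rw [inv_div] at h
  calc q - w = q * (1 - w / q) := by field_simp
    _ ≤ q * log (q / w) := mul_le_mul_of_nonneg_left h hq.le

lemma neg_log_sum_le_sum_mul_log_div {ι : Type*} {s : Finset ι} {w q : ι → ℝ}
    (hw : ∀ i ∈ s, 0 ≤ w i) (hq0 : ∀ i ∈ s, 0 ≤ q i) (hq1 : ∑ i ∈ s, q i = 1)
    (hac : ∀ i ∈ s, w i = 0 → q i = 0) :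
    -log (∑ i ∈ s, w i) ≤ ∑ i ∈ s, q i * log (q i / w i) := by
  set S := ∑ i ∈ s, w i
  have hS : 0 < S := by
    refine (sum_nonneg hw).lt_of_ne fun hS => ?_
    have hq : ∀ i ∈ s, q i = 0 := fun i hi =>
      hac i hi ((sum_eq_zero_iff_of_nonneg hw).1 hS.symm i hi)
    simp [sum_eq_zero hq] at hq1
  have hscale : ∀ i ∈ s, q i * log (q i / (w i / S)) = q i * log (q i / w i) + q i * log S := by
    intro i hi
    rcases eq_or_ne (q i) 0 with hq | hq
    · simp [hq]
    have hwi : w i ≠ 0 := mt (hac i hi) hq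
    rw [div_div_eq_mul_div, mul_div_right_comm, log_mul (div_ne_zero hq hwi) hS.ne', mul_add]
  have hsum := sum_le_sum fun i hi =>
    sub_le_mul_log_div (hq0 i hi) (div_nonneg (hw i hi) hS.le) fun h =>
      hac i hi ((div_eq_zero_iff.1 h).resolve_right hS.ne')
  rw [sum_sub_distrib, ← sum_div, div_self hS.ne', hq1, sub_self, sum_congr rfl hscale,
    sum_add_distrib, ← sum_mul, hq1, one_mul] at hsum
  linarith

lemma mul_log_div_mul_eq {q p f : ℝ} (hac : p = 0 → q = 0) (hf : f ≠ 0) :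
    q * log (q / (p * f)) = q * -log f + q * log (q / p) := by
  rcases eq_or_ne q 0 with rfl | hq
  · simp
  rw [← div_div, log_div (div_ne_zero hq (mt hac hq)) hf]
  ring

theorem stmt3_general {Ω X Y : Type*} [Fintype Ω]
    (D : Finset X) (N : ℕ)
    (xH : Ω → X) (yH : Ω → Y) (pH : X → Y → X → ℝ)
    (hpH : ∀ x y x', 0 < pH x y x')
    (pπ : Ω → ℝ) (hpπ0 : ∀ ω, 0 ≤ pπ ω)
    (q : X → Ω → ℝ) (hq0 : ∀ xt ω, 0 ≤ q xt ω) (hq1 : ∀ xt, ∑ ω, q xt ω = 1)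
    (habs : ∀ xt ω, pπ ω = 0 → q xt ω = 0) :
    (1 / N : ℝ) * ∑ xt ∈ D, (- Real.log (∑ ω, pπ ω * pH (xH ω) (yH ω) xt)) ≤
    (1 / N : ℝ) * ∑ xt ∈ D,
      ((∑ ω, q xt ω * (- Real.log (pH (xH ω) (yH ω) xt))) +
        ∑ ω, q xt ω * Real.log (q xt ω / pπ ω)) := by
  refine mul_le_mul_of_nonneg_left (sum_le_sum fun xt _ => ?_) (by positivity)
  have hac : ∀ ω ∈ univ, pπ ω * pH (xH ω) (yH ω) xt = 0 → q xt ω = 0 := fun ω _ h =>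
    habs xt ω ((mul_eq_zero.1 h).resolve_right (hpH _ _ _).ne')
  calc -log (∑ ω, pπ ω * pH (xH ω) (yH ω) xt)
      ≤ ∑ ω, q xt ω * log (q xt ω / (pπ ω * pH (xH ω) (yH ω) xt)) :=
        neg_log_sum_le_sum_mul_log_div (fun ω _ => mul_nonneg (hpπ0 ω) (hpH _ _ _).le)
          (fun ω _ => hq0 xt ω) (hq1 xt) hac
    _ = _ := by
      rw [← sum_add_distrib]
      exact sum_congr rfl fun ω _ => mul_log_div_mul_eq (habs xt ω) (hpH _ _ _).ne'

/-- the negative log-likelihood `L(π)` is bounded by the surrogate loss: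
for any policy `π` (with trajectory distribution `pπ`) and any family of goal-conditioned
trajectory distributions `(q xt)_{xt ∈ D}` (each absolutely continuous w.r.t. `pπ`),
`(1/N) ∑_{xt∈D} -log p_{H+1}^π(xt) ≤ (1/N) ∑_{xt∈D} (E_{q xt}[-log p_H(xt|x_H,y_H)] + KL(q xt, pπ))`,
where `p_{H+1}^π(xt) = E_π[p_H(xt|x_H,y_H)]`. -/
theorem stmt3 {Ω X Y : Type*} [Fintype Ω]
    (D : Finset X) (N : ℕ) (hN : D.card = N) (hN0 : 0 < N)
    (xH : Ω → X) (yH : Ω → Y) (pH : X → Y → X → ℝ)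
    (hpH : ∀ x y x', 0 < pH x y x')
    (pπ : Ω → ℝ) (hpπ0 : ∀ ω, 0 ≤ pπ ω) (hpπ1 : ∑ ω, pπ ω = 1)
    (q : X → Ω → ℝ) (hq0 : ∀ xt ω, 0 ≤ q xt ω) (hq1 : ∀ xt, ∑ ω, q xt ω = 1)
    (habs : ∀ xt ω, pπ ω = 0 → q xt ω = 0) :
    (1 / N : ℝ) * ∑ xt ∈ D, (- Real.log (∑ ω, pπ ω * pH (xH ω) (yH ω) xt)) ≤
    (1 / N : ℝ) * ∑ xt ∈ D,
      ((∑ ω, q xt ω * (- Real.log (pH (xH ω) (yH ω) xt))) +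
        ∑ ω, q xt ω * Real.log (q xt ω / pπ ω)) :=
  stmt3_general D N xH yH pH hpH pπ hpπ0 q hq0 hq1 habs
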